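/- Define F(x) = (-½log(2-eˣ) + ¼(e^{2x}-1)) ∘ (1+2x-eˣ)^{⟨-1⟩}, where (1+2x-eˣ)^{⟨-1⟩} denotes the compositional inverse of the power series 1+2x-eˣ = x - x²/2 - x³/6 - ⋯. Then the coefficients |Γ⁰_{1,n}| defined by F(x) = ∑_{n≥1}|Γ⁰_{1,n}|xⁿ/n! satisfy |Γ⁰_{1,1}| = 1, |Γ⁰_{1,2}| = 3, |Γ⁰_{1,3}| = 15, |Γ⁰_{1,4}| = 111. -/

import Mathlib

open PowerSeries

/-!
Only the coefficients up to degree four matter. Truncated at that order, Faà di Bruno's formula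
expresses the low coefficients of `f ∘ g` (with `g(0) = 0`) through those of `f` and `g`. Solving
`u ∘ h = x` degree by degree gives `h = x + x²/2 + 2x³/3 + 13x⁴/12 + ⋯`, and
`G = x + x² + 5x³/6 + 17x⁴/24 + ⋯`, so the coefficients of `F = G ∘ h` follow.
-/

/-- Composition `f(g)` of formal power series, intended for `g` with zero constant term. -/
noncomputable def pscomp {R : Type*} [CommRing R] (f g : PowerSeries R) : PowerSeries R :=
  PowerSeries.mk fun n => ∑ k ∈ Finset.range (n + 1), coeff (R := R) k f * coeff (R := R) n (g ^ k)

/-- The series `log(1-x) = -∑_{n≥1} xⁿ/n`. -/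
noncomputable def logOneSub : PowerSeries ℚ :=
  PowerSeries.mk fun n => if n = 0 then 0 else -(1 : ℚ) / n

/-- `u := 1 + 2x - eˣ`, a power series with zero constant term and unit linear
coefficient. -/
noncomputable def u : PowerSeries ℚ := 1 + 2 * X - PowerSeries.exp ℚ

/-- `G := -½·log(2-eˣ) + ¼·(e^{2x} - 1)`, where `log(2-eˣ) = log(1-(eˣ-1))`. -/
noncomputable def G : PowerSeries ℚ :=
  PowerSeries.C (R := ℚ) (-(1 / 2)) * pscomp logOneSub (PowerSeries.exp ℚ - 1) +
    PowerSeries.C (R := ℚ) (1 / 4) * (pscomp (PowerSeries.exp ℚ) (2 * X) - 1)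

section
variable {R : Type*} [CommRing R] (f g : PowerSeries R)

lemma coeff_pscomp (n : ℕ) :
    coeff n (pscomp f g) = ∑ k ∈ Finset.range (n + 1), coeff k f * coeff n (g ^ k) :=
  coeff_mk _ _

lemma coeff_pscomp_one : coeff 1 (pscomp f g) = coeff 1 f * coeff 1 g := by
  simp [coeff_pscomp, Finset.sum_range_succ]

variable {g} (hg : constantCoeff g = 0)
include hg

lemma coeff_pscomp_two :
    coeff 2 (pscomp f g) = coeff 1 f * coeff 2 g + coeff 2 f * coeff 1 g ^ 2 := by
  have h0 : coeff 0 g = 0 := by simpa using hg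
  simp [coeff_pscomp, Finset.sum_range_succ, pow_succ, coeff_mul,
    Finset.Nat.sum_antidiagonal_eq_sum_range_succ_mk, h0]

lemma coeff_pscomp_three :
    coeff 3 (pscomp f g) = coeff 1 f * coeff 3 g + 2 * coeff 2 f * coeff 1 g * coeff 2 g
      + coeff 3 f * coeff 1 g ^ 3 := by
  have h0 : coeff 0 g = 0 := by simpa using hg
  simp [coeff_pscomp, Finset.sum_range_succ, pow_succ, coeff_mul,
    Finset.Nat.sum_antidiagonal_eq_sum_range_succ_mk, h0]
  ring

lemma coeff_pscomp_four :
    coeff 4 (pscomp f g) = coeff 1 f * coeff 4 g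
      + coeff 2 f * (2 * coeff 1 g * coeff 3 g + coeff 2 g ^ 2)
      + 3 * coeff 3 f * coeff 1 g ^ 2 * coeff 2 g + coeff 4 f * coeff 1 g ^ 4 := by
  have h0 : coeff 0 g = 0 := by simpa using hg
  simp [coeff_pscomp, Finset.sum_range_succ, pow_succ, coeff_mul,
    Finset.Nat.sum_antidiagonal_eq_sum_range_succ_mk, h0]
  ring
end

lemma coeff_u_one : coeff 1 u = 1 := by
  rw [u, ← map_ofNat C 2]
  norm_num [coeff_C_mul, coeff_X]

lemma coeff_u_of_two_le {n : ℕ} (hn : 2 ≤ n) : coeff n u = -1 / n.factorial := by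
  rw [u, ← map_ofNat C 2]
  simp [coeff_C_mul, coeff_X, coeff_one, neg_div, show n ≠ 0 by omega, show n ≠ 1 by omega]

lemma coeff_of_pscomp_u_eq_X {h : ℚ⟦X⟧} (hh0 : constantCoeff h = 0) (hinv : pscomp u h = X) :
    coeff 1 h = 1 ∧ coeff 2 h = 1 / 2 ∧ coeff 3 h = 2 / 3 ∧ coeff 4 h = 13 / 12 := by
  have e1 := congrArg (coeff 1) hinv
  have e2 := congrArg (coeff 2) hinv
  have e3 := congrArg (coeff 3) hinv
  have e4 := congrArg (coeff 4) hinv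
  rw [coeff_pscomp_one] at e1
  rw [coeff_pscomp_two _ hh0] at e2
  rw [coeff_pscomp_three _ hh0] at e3
  rw [coeff_pscomp_four _ hh0] at e4
  norm_num [coeff_u_one, coeff_u_of_two_le, coeff_X, Nat.factorial] at e1 e2 e3 e4
  have h1 : coeff 1 h = 1 := e1
  have h2 : coeff 2 h = 1 / 2 := by rw [h1] at e2; linarith
  have h3 : coeff 3 h = 2 / 3 := by rw [h1, h2] at e3; linarith
  have h4 : coeff 4 h = 13 / 12 := by rw [h1, h2, h3] at e4; linarith
  exact ⟨h1, h2, h3, h4⟩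

lemma coeff_G_one : coeff 1 G = 1 := by
  rw [G, ← map_ofNat C 2]
  norm_num [coeff_C_mul, coeff_pscomp_one, logOneSub, coeff_exp, coeff_X]

lemma coeff_G_two : coeff 2 G = 1 := by
  rw [G, ← map_ofNat C 2]
  norm_num [coeff_C_mul, coeff_pscomp_two, logOneSub, coeff_exp, coeff_X, Nat.factorial]

lemma coeff_G_three : coeff 3 G = 5 / 6 := by
  rw [G, ← map_ofNat C 2]
  norm_num [coeff_C_mul, coeff_pscomp_three, logOneSub, coeff_exp, coeff_X, Nat.factorial]

lemma coeff_G_four : coeff 4 G = 17 / 24 := by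
  rw [G, ← map_ofNat C 2]
  norm_num [coeff_C_mul, coeff_pscomp_four, logOneSub, coeff_exp, coeff_X, Nat.factorial]

theorem necklace_graph_counts_general (h F : PowerSeries ℚ)
    (hh0 : constantCoeff (R := ℚ) h = 0)
    (hinv₁ : pscomp u h = X)
    (hF : F = pscomp G h) :
    coeff (R := ℚ) 1 F = 1 ∧
    (2 : ℚ) * coeff (R := ℚ) 2 F = 3 ∧
    (6 : ℚ) * coeff (R := ℚ) 3 F = 15 ∧
    (24 : ℚ) * coeff (R := ℚ) 4 F = 111 := by
  obtain ⟨h1, h2, h3, h4⟩ := coeff_of_pscomp_u_eq_X hh0 hinv₁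
  subst hF
  rw [coeff_pscomp_one, coeff_pscomp_two _ hh0, coeff_pscomp_three _ hh0, coeff_pscomp_four _ hh0]
  simp only [coeff_G_one, coeff_G_two, coeff_G_three, coeff_G_four, h1, h2, h3, h4]
  norm_num

/-- If `h` is the compositional inverse of `u = 1 + 2x - eˣ` and
`F = G ∘ h` with `G = -½log(2-eˣ) + ¼(e^{2x}-1)`, then the coefficients
`|Γ⁰_{1,n}|` of `xⁿ/n!` in `F` satisfy `|Γ⁰_{1,1}| = 1`, `|Γ⁰_{1,2}| = 3`,
`|Γ⁰_{1,3}| = 15`, `|Γ⁰_{1,4}| = 111`. -/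
theorem necklace_graph_counts (h F : PowerSeries ℚ)
    (hh0 : constantCoeff (R := ℚ) h = 0)
    (hinv₁ : pscomp u h = X) (hinv₂ : pscomp h u = X)
    (hF : F = pscomp G h) :
    coeff (R := ℚ) 1 F = 1 ∧
    (2 : ℚ) * coeff (R := ℚ) 2 F = 3 ∧
    (6 : ℚ) * coeff (R := ℚ) 3 F = 15 ∧
    (24 : ℚ) * coeff (R := ℚ) 4 F = 111 :=
  necklace_graph_counts_general h F hh0 hinv₁ hF
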